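/- arXiv:2408.15968 — 9 statements merged into one kernel-verified Lean document; each statement's English description precedes it below -/
import Mathlib

section
/- Every coordinatewise monotone function f : [0,1]^n → ℝ∪{±∞} is Lebesgue measurable. -/
/-!
Moving from `x` to `y ≥ x` one coordinate at a time inside the cube shows that a coordinatewise
monotone function is monotone for the product order. Every superlevel set `{f > a}` of a monotone
function on the cube is then order-connected, and order-connected subsets of `ℝⁿ` have a Lebesgue
null frontier, so they are null measurable.
-/

open MeasureTheory Set

theorem Function.update_eq_add_smul_single {ι R : Type*} [DecidableEq ι] [Ring R]
    (x : ι → R) (i : ι) (a : R) : update x i a = x + (a - x i) • Pi.single i 1 := by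
  ext j
  rcases eq_or_ne j i with rfl | hji <;> simp [*]

theorem monotoneOn_of_monotone_along_coordinates {ι R β : Type*} [Fintype ι] [DecidableEq ι]
    [Ring R] [PartialOrder R] [IsOrderedAddMonoid R] [Preorder β]
    {s : Set (ι → R)} (hs : s.OrdConnected) {f : (ι → R) → β}
    (hf : ∀ x ∈ s, ∀ (i : ι) (h : R), 0 ≤ h →
      x + h • Pi.single i 1 ∈ s → f x ≤ f (x + h • Pi.single i 1)) :
    MonotoneOn f s := by
  intro x hx y hy hxy
  have hmem (t : Finset ι) : t.piecewise y x ∈ s := hs.out hx hy (t.piecewise_mem_Icc' hxy)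
  have hpath (t : Finset ι) : f x ≤ f (t.piecewise y x) := by
    induction t using Finset.induction_on with
    | empty => simp
    | insert j t hj ih =>
      have hstep := hmem (insert j t)
      rw [Finset.piecewise_insert, Function.update_eq_add_smul_single,
        Finset.piecewise_eq_of_notMem _ _ _ hj] at hstep ⊢
      exact ih.trans (hf _ (hmem t) j _ (sub_nonneg.2 (hxy j)) hstep)
  simpa using hpath Finset.univ

theorem MonotoneOn.ordConnected_preimage_Ioi_inter {α β : Type*} [Preorder α] [Preorder β]
    {s : Set α} {f : α → β} (hf : MonotoneOn f s) (hs : s.OrdConnected) (a : β) :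
    (f ⁻¹' Ioi a ∩ s).OrdConnected :=
  ⟨fun _ hx _ hy z hz ↦
    have hzs : z ∈ s := hs.out hx.2 hy.2 hz
    ⟨lt_of_lt_of_le hx.1 (hf hx.2 hzs hz.1), hzs⟩⟩

theorem MonotoneOn.nullMeasurable_restrict {ι β : Type*} [Fintype ι] [LinearOrder β]
    [TopologicalSpace β] [OrderTopology β] [SecondCountableTopology β] [MeasurableSpace β]
    [BorelSpace β] {s : Set (ι → ℝ)} {f : (ι → ℝ) → β} (hf : MonotoneOn f s)
    (hs : s.OrdConnected) : NullMeasurable f (volume.restrict s) :=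
  measurable_of_Ioi (δ := NullMeasurableSpace _ (volume.restrict s)) fun a ↦
    (nullMeasurableSet_restrict hs.nullMeasurableSet).2
      (hf.ordConnected_preimage_Ioi_inter hs a).nullMeasurableSet

/-- Every coordinatewise monotone function `f : [0,1]^n → ℝ ∪ {±∞}` is Lebesgue
measurable (i.e. measurable with respect to the completed Lebesgue measure restricted
to the unit cube). -/
theorem coordinatewise_monotone_lebesgue_measurable
    (n : ℕ) (f : (Fin n → ℝ) → EReal)
    (hmono : ∀ x ∈ Set.Icc (0 : Fin n → ℝ) 1, ∀ (i : Fin n) (h : ℝ), 0 ≤ h →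
      x + h • (Pi.single i 1 : Fin n → ℝ) ∈ Set.Icc (0 : Fin n → ℝ) 1 →
      f x ≤ f (x + h • (Pi.single i 1 : Fin n → ℝ))) :
    NullMeasurable f (volume.restrict (Set.Icc (0 : Fin n → ℝ) 1)) :=
  (monotoneOn_of_monotone_along_coordinates ordConnected_Icc hmono).nullMeasurable_restrict
    ordConnected_Icc
end

section
/- Let f : (0,1) → (0,∞) be a function for which there exists ω : (0,1) → (0,∞) with ω(h) → 0 as h → 0, such that for every finite convex combination (αᵢ)ᵢ₌₁ⁿ ⊆ [0,1] (so Σαᵢ = 1) and every h ∈ (0,1), one has Σᵢ αᵢ f(αᵢ h) ≤ f(h) + ω(h). Then the limit lim_{h↓0} f(h) exists. -/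
/-!
Split the weight `1` into `m = ⌊1/t⌋₊` copies of `t` and a remainder `r = 1 - m t ∈ [0, t)`.
Since `f > 0`, the hypothesis gives `(1 - t) f(t h) ≤ m t f(t h) ≤ f h + ω h`, so every value
`f x` with `0 < x < h` is at most `(f h + ω h) / (1 - x / h)`. Letting `x → 0` gives
`limsup f ≤ f h + ω h` for every `h`; letting `h → 0`, where `ω h → 0`, gives
`limsup f ≤ liminf f`.
-/

open Filter Topology Set

lemma exists_nat_mul_mem_Ioc {a t : ℝ} (ha : 0 ≤ a) (ht : 0 < t) :
    ∃ m : ℕ, a - t < m * t ∧ m * t ≤ a := by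
  refine ⟨⌊a / t⌋₊, ?_, (le_div_iff₀ ht).1 (Nat.floor_le (by positivity))⟩
  have := (div_lt_iff₀ ht).1 (Nat.lt_floor_add_one (a / t))
  linarith

lemma EReal.le_liminf_of_le_add_of_tendsto_zero {α : Type*} {l : Filter α} [l.NeBot]
    {u v : α → ℝ} {L : EReal} (hv : Tendsto v l (𝓝 0))
    (hL : ∀ᶠ x in l, L ≤ ((u x + v x : ℝ) : EReal)) :
    L ≤ liminf (fun x => (u x : EReal)) l := by
  have hv' : limsup (fun x => (v x : EReal)) l = 0 :=
    (EReal.tendsto_coe.2 hv).limsup_eq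
  calc L ≤ liminf ((fun x => (v x : EReal)) + fun x => (u x : EReal)) l :=
        le_liminf_of_le (by isBoundedDefault) <| hL.mono fun x hx => by
          simpa [add_comm] using hx
    _ ≤ limsup (fun x => (v x : EReal)) l + liminf (fun x => (u x : EReal)) l :=
        EReal.liminf_add_le (by simp [hv']) (by simp [hv'])
    _ = liminf (fun x => (u x : EReal)) l := by rw [hv', zero_add]

section ConvexBound

variable {f ω : ℝ → ℝ}

lemma one_sub_mul_le_of_convex_bound
    (hf : ∀ h ∈ Ioo (0:ℝ) 1, 0 < f h)
    (hmain : ∀ (n : ℕ) (α : Fin n → ℝ), (∀ i, α i ∈ Icc (0:ℝ) 1) →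
      (∑ i, α i) = 1 → ∀ h ∈ Ioo (0:ℝ) 1, (∑ i, α i * f (α i * h)) ≤ f h + ω h)
    {t h : ℝ} (ht : t ∈ Ioo (0:ℝ) 1) (hh : h ∈ Ioo (0:ℝ) 1) :
    (1 - t) * f (t * h) ≤ f h + ω h := by
  obtain ⟨m, hm_gt, hm_le⟩ := exists_nat_mul_mem_Ioc zero_le_one ht.1
  set r := 1 - m * t
  have hr : r ∈ Ico (0:ℝ) 1 := ⟨by linarith, by linarith [ht.2]⟩
  have hweights : ∀ i, (Fin.cons r fun _ : Fin m => t : Fin (m + 1) → ℝ) i ∈ Icc (0:ℝ) 1 :=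
    Fin.cases (Ico_subset_Icc_self hr) fun _ => Ioo_subset_Icc_self ht
  have hcomb := hmain (m + 1) _ hweights (by simp [Fin.sum_univ_succ, r]) h hh
  simp only [Fin.sum_univ_succ, Fin.cons_zero, Fin.cons_succ, Finset.sum_const,
    Finset.card_univ, Fintype.card_fin, nsmul_eq_mul] at hcomb
  have hmul_mem : ∀ s ∈ Ioo (0:ℝ) 1, s * h ∈ Ioo (0:ℝ) 1 := fun s hs =>
    ⟨mul_pos hs.1 hh.1, by nlinarith [hs.2, hh.1, hh.2]⟩
  have hrem : 0 ≤ r * f (r * h) := by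
    rcases hr.1.eq_or_lt with hr0 | hr0
    · simp [← hr0]
    · exact mul_nonneg hr0.le (hf _ (hmul_mem r ⟨hr0, hr.2⟩)).le
  calc (1 - t) * f (t * h) ≤ m * t * f (t * h) :=
        mul_le_mul_of_nonneg_right hm_gt.le (hf _ (hmul_mem t ht)).le
    _ ≤ f h + ω h := by linarith

lemma limsup_le_of_convex_bound
    (hf : ∀ h ∈ Ioo (0:ℝ) 1, 0 < f h)
    (hmain : ∀ (n : ℕ) (α : Fin n → ℝ), (∀ i, α i ∈ Icc (0:ℝ) 1) →
      (∑ i, α i) = 1 → ∀ h ∈ Ioo (0:ℝ) 1, (∑ i, α i * f (α i * h)) ≤ f h + ω h)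
    {h : ℝ} (hh : h ∈ Ioo (0:ℝ) 1) :
    limsup (fun x => (f x : EReal)) (𝓝[>] 0) ≤ ((f h + ω h : ℝ) : EReal) := by
  set C := f h + ω h
  have hbound : ∀ᶠ x in 𝓝[>] (0:ℝ), f x ≤ C / (1 - x / h) := by
    filter_upwards [Ioo_mem_nhdsGT hh.1] with x hx
    have ht : x / h ∈ Ioo (0:ℝ) 1 := ⟨div_pos hx.1 hh.1, (div_lt_one hh.1).2 hx.2⟩
    have hkey := one_sub_mul_le_of_convex_bound hf hmain ht hh
    rw [div_mul_cancel₀ _ hh.1.ne'] at hkey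
    rwa [le_div_iff₀ (sub_pos.2 ht.2), mul_comm]
  have hlim : Tendsto (fun x => C / (1 - x / h)) (𝓝[>] 0) (𝓝 C) := by
    have : ContinuousAt (fun x => C / (1 - x / h)) 0 :=
      continuousAt_const.div (continuousAt_const.sub (continuousAt_id.div_const h)) (by simp)
    simpa using this.tendsto.mono_left nhdsWithin_le_nhds
  calc limsup (fun x => (f x : EReal)) (𝓝[>] 0)
      ≤ limsup (fun x => ((C / (1 - x / h) : ℝ) : EReal)) (𝓝[>] 0) :=
        limsup_le_limsup (hbound.mono fun x hx => EReal.coe_le_coe_iff.2 hx)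
    _ = C := (EReal.tendsto_coe.2 hlim).limsup_eq

end ConvexBound

theorem non_oscillation_criterion_general
    (f ω : ℝ → ℝ)
    (hf : ∀ h ∈ Set.Ioo (0:ℝ) 1, 0 < f h)
    (hω0 : Filter.Tendsto ω (nhdsWithin (0:ℝ) (Set.Ioi 0)) (nhds 0))
    (hmain : ∀ (n : ℕ) (α : Fin n → ℝ), (∀ i, α i ∈ Set.Icc (0:ℝ) 1) →
      (∑ i, α i) = 1 → ∀ h ∈ Set.Ioo (0:ℝ) 1,
      (∑ i, α i * f (α i * h)) ≤ f h + ω h) :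
    Filter.limsup (fun h => (f h : EReal)) (nhdsWithin (0:ℝ) (Set.Ioi 0))
      = Filter.liminf (fun h => (f h : EReal)) (nhdsWithin (0:ℝ) (Set.Ioi 0)) := by
  refine le_antisymm (EReal.le_liminf_of_le_add_of_tendsto_zero hω0 ?_) liminf_le_limsup
  filter_upwards [Ioo_mem_nhdsGT one_pos] with h hh
  exact limsup_le_of_convex_bound hf hmain hh

/-- Non-oscillation criterion: if `f : (0,1) → (0,∞)` satisfies
`∑ αᵢ f(αᵢ h) ≤ f(h) + ω(h)` for every finite convex combination `(αᵢ)` and every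
`h ∈ (0,1)`, where `ω(h) → 0` as `h → 0`, then the limit `lim_{h ↓ 0} f(h)` exists
(i.e. the limsup and liminf at `0⁺` coincide as extended reals). -/
theorem non_oscillation_criterion
    (f ω : ℝ → ℝ)
    (hf : ∀ h ∈ Set.Ioo (0:ℝ) 1, 0 < f h)
    (hω : ∀ h ∈ Set.Ioo (0:ℝ) 1, 0 < ω h)
    (hω0 : Filter.Tendsto ω (nhdsWithin (0:ℝ) (Set.Ioi 0)) (nhds 0))
    (hmain : ∀ (n : ℕ) (α : Fin n → ℝ), (∀ i, α i ∈ Set.Icc (0:ℝ) 1) →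
      (∑ i, α i) = 1 → ∀ h ∈ Set.Ioo (0:ℝ) 1,
      (∑ i, α i * f (α i * h)) ≤ f h + ω h) :
    Filter.limsup (fun h => (f h : EReal)) (nhdsWithin (0:ℝ) (Set.Ioi 0))
      = Filter.liminf (fun h => (f h : EReal)) (nhdsWithin (0:ℝ) (Set.Ioi 0)) :=
  non_oscillation_criterion_general f ω hf hω0 hmain
end

section
/- Let T : H → [0,∞) satisfy the superadditivity (reverse triangle) inequality T(r,s) + T(s,t) ≤ T(r,t) for all 0 ≤ r ≤ s ≤ t ≤ 1, where H = {(s,t) ∈ [0,1]² : s ≤ t}. Then for Lebesgue-a.e. t ∈ (0,1), the limit lim_{n→∞} T(rₙ,sₙ)/(sₙ − rₙ) exists and is finite, and is independent of the choice of sequences, whenever rₙ < t ≤ sₙ (or rₙ ≤ t < sₙ) with rₙ, sₙ → t and rₙ < sₙ. -/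
open Filter Topology Set MeasureTheory

open scoped ENNReal

namespace AeDiagAux

/-- The set of partition sums of `T` over partitions of `[0, t]`. -/
def PtnSums (T : ℝ → ℝ → ℝ) (t : ℝ) : Set ℝ :=
  {x | ∃ (n : ℕ) (p : ℕ → ℝ), p 0 = 0 ∧ p n = t ∧ (∀ i, i < n → p i ≤ p (i+1)) ∧
    x = ∑ i ∈ Finset.range n, T (p i) (p (i+1))}

noncomputable def gg (T : ℝ → ℝ → ℝ) (t : ℝ) : ℝ := sInf (PtnSums T t)

variable {T : ℝ → ℝ → ℝ}

lemma chain_mono {n : ℕ} {p : ℕ → ℝ} (hm : ∀ i, i < n → p i ≤ p (i+1)) :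
    ∀ j, j ≤ n → ∀ i, i ≤ j → p i ≤ p j := by
  intro j
  induction j with
  | zero => intro _ i hi; simp [Nat.le_zero.1 hi]
  | succ j ih =>
    intro hj i hi
    by_cases h : i = j + 1
    · simp [h]
    · have hij : i ≤ j := Nat.lt_succ_iff.1 (lt_of_le_of_ne hi h)
      have hjn : j < n := Nat.lt_of_succ_le hj
      exact (ih hjn.le i hij).trans (hm j hjn)

lemma chain_bounds {n : ℕ} {p : ℕ → ℝ} {t : ℝ} (h0 : p 0 = 0) (hn : p n = t)
    (hm : ∀ i, i < n → p i ≤ p (i+1)) : ∀ i, i ≤ n → 0 ≤ p i ∧ p i ≤ t := by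
  intro i hi
  constructor
  · rw [← h0]; exact chain_mono hm i hi 0 (Nat.zero_le i)
  · rw [← hn]; exact chain_mono hm n le_rfl i hi

section
variable (hnn : ∀ r s : ℝ, 0 ≤ r → r ≤ s → s ≤ 1 → 0 ≤ T r s)
variable (hsup : ∀ r s t : ℝ, 0 ≤ r → r ≤ s → s ≤ t → t ≤ 1 → T r s + T s t ≤ T r t)

include hnn hsup

lemma T_diag {t : ℝ} (h0 : 0 ≤ t) (h1 : t ≤ 1) : T t t = 0 := by
  have h := hsup t t t h0 le_rfl le_rfl h1
  have h' := hnn t t h0 le_rfl h1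
  linarith

lemma ptn_nonneg {t x : ℝ} (h0 : 0 ≤ t) (h1 : t ≤ 1) (hx : x ∈ PtnSums T t) : 0 ≤ x := by
  obtain ⟨n, p, hp0, hpn, hm, rfl⟩ := hx
  refine Finset.sum_nonneg fun i hi => ?_
  rw [Finset.mem_range] at hi
  obtain ⟨ha, hb⟩ := chain_bounds hp0 hpn hm i hi.le
  obtain ⟨ha', hb'⟩ := chain_bounds hp0 hpn hm (i+1) hi
  exact hnn _ _ ha (hm i hi) (hb'.trans h1)

omit hnn hsup in
lemma ptn_mem {t : ℝ} (h0 : 0 ≤ t) : T 0 t ∈ PtnSums T t := by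
  refine ⟨1, fun i => if i = 0 then 0 else t, by simp, by simp, ?_, by simp⟩
  intro i hi
  interval_cases i
  simpa using h0

lemma gg_nonneg {t : ℝ} (h0 : 0 ≤ t) (h1 : t ≤ 1) : 0 ≤ gg T t :=
  le_csInf ⟨_, ptn_mem h0⟩ fun x hx => ptn_nonneg hnn hsup h0 h1 hx

omit hnn hsup in
lemma ptn_bdd {t : ℝ} (hnn : ∀ r s : ℝ, 0 ≤ r → r ≤ s → s ≤ 1 → 0 ≤ T r s)
    (hsup : ∀ r s t : ℝ, 0 ≤ r → r ≤ s → s ≤ t → t ≤ 1 → T r s + T s t ≤ T r t)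
    (h0 : 0 ≤ t) (h1 : t ≤ 1) : BddBelow (PtnSums T t) :=
  ⟨0, fun x hx => ptn_nonneg hnn hsup h0 h1 hx⟩

lemma gg_le_T {t : ℝ} (h0 : 0 ≤ t) (h1 : t ≤ 1) : gg T t ≤ T 0 t :=
  csInf_le (ptn_bdd hnn hsup h0 h1) (ptn_mem h0)

lemma gg_zero : gg T 0 = 0 :=
  le_antisymm (by simpa [T_diag hnn hsup le_rfl zero_le_one] using gg_le_T hnn hsup le_rfl zero_le_one)
    (gg_nonneg hnn hsup le_rfl zero_le_one)

lemma gg_le_add {r s : ℝ} (h0 : 0 ≤ r) (hrs : r ≤ s) (h1 : s ≤ 1) :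
    gg T s ≤ gg T r + T r s := by
  have key : ∀ x ∈ PtnSums T r, gg T s ≤ x + T r s := by
    rintro x ⟨n, p, hp0, hpn, hm, rfl⟩
    have mem : (∑ i ∈ Finset.range n, T (p i) (p (i+1))) + T r s ∈ PtnSums T s := by
      refine ⟨n+1, fun i => if i ≤ n then p i else s, by simp [hp0], by simp, ?_, ?_⟩
      · intro i hi
        rcases Nat.lt_succ_iff_lt_or_eq.1 hi with h | h
        · simp only [h.le, (Nat.succ_le_of_lt h), if_pos]
          exact hm i h
        · subst h
          simp only [le_rfl, if_pos, Nat.not_succ_le_self, if_neg]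
          rw [hpn]; exact hrs
      · rw [Finset.sum_range_succ]
        congr 1
        · refine Finset.sum_congr rfl fun i hi => ?_
          rw [Finset.mem_range] at hi
          simp [hi.le, Nat.succ_le_of_lt hi]
        · simp [hpn]
    exact csInf_le (ptn_bdd hnn hsup (h0.trans hrs) h1) mem
  have hb : ∀ x ∈ PtnSums T r, gg T s - T r s ≤ x := fun x hx => by linarith [key x hx]
  have h2 : gg T s - T r s ≤ gg T r := le_csInf ⟨_, ptn_mem (t := r) h0⟩ hb
  linarith

lemma gg_mono {r s : ℝ} (h0 : 0 ≤ r) (hrs : r ≤ s) (h1 : s ≤ 1) : gg T r ≤ gg T s := by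
  refine le_csInf ⟨_, ptn_mem (t := s) (h0.trans hrs)⟩ ?_
  rintro x ⟨n, p, hp0, hpn, hm, rfl⟩
  have hr1 : r ≤ 1 := hrs.trans h1
  have mem : (∑ i ∈ Finset.range n, T (min (p i) r) (min (p (i+1)) r)) ∈ PtnSums T r :=
    ⟨n, fun i => min (p i) r, by simp [hp0, h0], by simp [hpn, hrs],
      fun i hi => min_le_min (hm i hi) le_rfl, rfl⟩
  refine (csInf_le (ptn_bdd hnn hsup h0 hr1) mem).trans (Finset.sum_le_sum fun i hi => ?_)
  rw [Finset.mem_range] at hi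
  obtain ⟨ha, hb⟩ := chain_bounds hp0 hpn hm i hi.le
  obtain ⟨ha', hb'⟩ := chain_bounds hp0 hpn hm (i+1) hi
  have hab : p i ≤ p (i+1) := hm i hi
  rcases le_total (p (i+1)) r with h | h
  · rw [min_eq_left (hab.trans h), min_eq_left h]
  · rcases le_total (p i) r with h' | h'
    · rw [min_eq_left h', min_eq_right h]
      have := hsup (p i) r (p (i+1)) ha h' h (hb'.trans h1)
      have := hnn r (p (i+1)) h0 h (hb'.trans h1)
      linarith
    · rw [min_eq_right h', min_eq_right h]
      rw [T_diag hnn hsup h0 hr1]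
      exact hnn _ _ ha hab (hb'.trans h1)


/-- defect function -/
noncomputable def EE (T : ℝ → ℝ → ℝ) (a b : ℝ) : ℝ := T a b - (gg T b - gg T a)

lemma EE_nonneg {a b : ℝ} (h0 : 0 ≤ a) (hab : a ≤ b) (h1 : b ≤ 1) : 0 ≤ EE T a b := by
  have := gg_le_add hnn hsup h0 hab h1
  unfold EE; linarith

omit hnn hsup in
lemma EE_super {a b c : ℝ} (h0 : 0 ≤ a) (hab : a ≤ b) (hbc : b ≤ c) (h1 : c ≤ 1)
    (hsup : ∀ r s t : ℝ, 0 ≤ r → r ≤ s → s ≤ t → t ≤ 1 → T r s + T s t ≤ T r t) :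
    EE T a b + EE T b c ≤ EE T a c := by
  have := hsup a b c h0 hab hbc h1
  unfold EE; linarith

lemma EE_mono_right {a b c : ℝ} (h0 : 0 ≤ a) (hab : a ≤ b) (hbc : b ≤ c) (h1 : c ≤ 1) :
    EE T a b ≤ EE T a c := by
  have h := EE_super h0 hab hbc h1 hsup
  have := EE_nonneg hnn hsup (h0.trans hab) hbc h1
  linarith

/-- existence of a partition of `[0,1]` with small total defect. -/
lemma exists_ptn_small {ε : ℝ} (hε : 0 < ε) :
    ∃ (n : ℕ) (p : ℕ → ℝ), p 0 = 0 ∧ p n = 1 ∧ (∀ i, i < n → p i ≤ p (i+1)) ∧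
      (∑ i ∈ Finset.range n, EE T (p i) (p (i+1))) < ε := by
  obtain ⟨x, hx, hlt⟩ := exists_lt_of_csInf_lt (s := PtnSums T 1) ⟨_, ptn_mem zero_le_one⟩
    (lt_add_of_pos_right (gg T 1) hε)
  obtain ⟨n, p, hp0, hpn, hm, rfl⟩ := hx
  refine ⟨n, p, hp0, hpn, hm, ?_⟩
  have tele : ∑ i ∈ Finset.range n, (gg T (p (i+1)) - gg T (p i)) = gg T (p n) - gg T (p 0) :=
    Finset.sum_range_sub (fun i => gg T (p i)) n
  have : ∑ i ∈ Finset.range n, EE T (p i) (p (i+1))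
      = (∑ i ∈ Finset.range n, T (p i) (p (i+1))) - (gg T (p n) - gg T (p 0)) := by
    rw [← tele, ← Finset.sum_sub_distrib]; rfl
  rw [this, hp0, hpn, gg_zero hnn hsup]
  have hlt' : (∑ i ∈ Finset.range n, T (p i) (p (i+1))) < gg T 1 + ε := hlt
  linarith

omit hnn hsup

/-- clamp to [0,1] -/
noncomputable def cl (t : ℝ) : ℝ := max 0 (min t 1)

lemma cl_mem (t : ℝ) : 0 ≤ cl t ∧ cl t ≤ 1 :=
  ⟨le_max_left _ _, max_le (by norm_num) (min_le_right _ _)⟩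

lemma cl_mono : Monotone cl := fun a b h =>
  max_le_max le_rfl (min_le_min h le_rfl)

lemma cl_eq {t : ℝ} (h0 : 0 ≤ t) (h1 : t ≤ 1) : cl t = t := by
  unfold cl; rw [min_eq_left h1, max_eq_right h0]

/-- the auxiliary monotone function associated to a partition. -/
noncomputable def hh (T : ℝ → ℝ → ℝ) (n : ℕ) (p : ℕ → ℝ) (t : ℝ) : ℝ :=
  ∑ i ∈ Finset.range n, EE T (min (p i) (cl t)) (min (p (i+1)) (cl t))

include hnn hsup

lemma hh_term_mono {a b τ τ' : ℝ} (h0 : 0 ≤ a) (hab : a ≤ b) (h1 : b ≤ 1)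
    (hτ0 : 0 ≤ τ) (hττ : τ ≤ τ') (hτ1 : τ' ≤ 1) :
    EE T (min a τ) (min b τ) ≤ EE T (min a τ') (min b τ') := by
  rcases le_total τ a with h | h
  · rw [min_eq_right h, min_eq_right (h.trans hab)]
    rw [show EE T τ τ = T τ τ - (gg T τ - gg T τ) from rfl, T_diag hnn hsup hτ0 (hττ.trans hτ1)]
    have : (0:ℝ) ≤ EE T (min a τ') (min b τ') :=
      EE_nonneg hnn hsup (le_min h0 (hτ0.trans hττ)) (min_le_min hab le_rfl)
        ((min_le_right _ _).trans hτ1)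
    linarith
  · rw [min_eq_left h, min_eq_left (h.trans hττ)]
    exact EE_mono_right hnn hsup h0 (le_min hab h) (min_le_min le_rfl hττ)
      ((min_le_left _ _).trans h1)

lemma hh_mono {n : ℕ} {p : ℕ → ℝ} (hp0 : p 0 = 0) (hpn : p n = 1)
    (hm : ∀ i, i < n → p i ≤ p (i+1)) : Monotone (hh T n p) := by
  intro a b hab
  refine Finset.sum_le_sum fun i hi => ?_
  rw [Finset.mem_range] at hi
  obtain ⟨ha, hb⟩ := chain_bounds hp0 hpn hm i hi.le
  obtain ⟨ha', hb'⟩ := chain_bounds hp0 hpn hm (i+1) hi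
  exact hh_term_mono hnn hsup ha (hm i hi) hb' (cl_mem a).1 (cl_mono hab) (cl_mem b).2

lemma hh_nonpos {n : ℕ} {p : ℕ → ℝ} (hp0 : p 0 = 0) (hpn : p n = 1)
    (hm : ∀ i, i < n → p i ≤ p (i+1)) {t : ℝ} (ht : t ≤ 0) : hh T n p t = 0 := by
  have hcl : cl t = 0 := by
    unfold cl
    rw [max_eq_left]
    exact (min_le_left _ _).trans ht
  unfold hh
  rw [hcl]
  refine Finset.sum_eq_zero fun i hi => ?_
  rw [Finset.mem_range] at hi
  obtain ⟨ha, _⟩ := chain_bounds hp0 hpn hm i hi.le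
  obtain ⟨ha', _⟩ := chain_bounds hp0 hpn hm (i+1) hi
  rw [min_eq_right ha, min_eq_right ha']
  rw [show EE T 0 0 = T 0 0 - (gg T 0 - gg T 0) from rfl, T_diag hnn hsup le_rfl zero_le_one]
  ring

lemma hh_ge_one {n : ℕ} {p : ℕ → ℝ} (hp0 : p 0 = 0) (hpn : p n = 1)
    (hm : ∀ i, i < n → p i ≤ p (i+1)) {t : ℝ} (ht : 1 ≤ t) :
    hh T n p t = ∑ i ∈ Finset.range n, EE T (p i) (p (i+1)) := by
  have hcl : cl t = 1 := by unfold cl; rw [min_eq_right ht, max_eq_right zero_le_one]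
  unfold hh
  rw [hcl]
  refine Finset.sum_congr rfl fun i hi => ?_
  rw [Finset.mem_range] at hi
  obtain ⟨_, hb⟩ := chain_bounds hp0 hpn hm i hi.le
  obtain ⟨_, hb'⟩ := chain_bounds hp0 hpn hm (i+1) hi
  rw [min_eq_left hb, min_eq_left hb']

lemma hh_key {n : ℕ} {p : ℕ → ℝ} (hp0 : p 0 = 0) (hpn : p n = 1)
    (hm : ∀ i, i < n → p i ≤ p (i+1)) {j : ℕ} (hj : j < n) {r s : ℝ}
    (hjr : p j ≤ r) (hrs : r ≤ s) (hsj : s ≤ p (j+1)) :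
    EE T r s ≤ hh T n p s - hh T n p r := by
  obtain ⟨hj0, _⟩ := chain_bounds hp0 hpn hm j hj.le
  obtain ⟨_, hj1'⟩ := chain_bounds hp0 hpn hm (j+1) hj
  have hr0 : 0 ≤ r := hj0.trans hjr
  have hs1 : s ≤ 1 := hsj.trans hj1'
  have hclr : cl r = r := cl_eq hr0 (hrs.trans hs1)
  have hcls : cl s = s := cl_eq (hr0.trans hrs) hs1
  unfold hh
  rw [hclr, hcls, ← Finset.sum_sub_distrib]
  have hterm : EE T r s ≤ EE T (min (p j) s) (min (p (j+1)) s)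
      - EE T (min (p j) r) (min (p (j+1)) r) := by
    rw [min_eq_left (hjr.trans hrs), min_eq_left hjr, min_eq_right hsj,
      min_eq_right (hrs.trans hsj)]
    have := EE_super hj0 hjr hrs hs1 hsup
    linarith
  refine hterm.trans (Finset.single_le_sum (f := fun i => EE T (min (p i) s) (min (p (i+1)) s)
    - EE T (min (p i) r) (min (p (i+1)) r)) ?_ (Finset.mem_range.2 hj))
  intro i hi
  rw [Finset.mem_range] at hi
  obtain ⟨ha, _⟩ := chain_bounds hp0 hpn hm i hi.le
  obtain ⟨_, hb'⟩ := chain_bounds hp0 hpn hm (i+1) hi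
  have := hh_term_mono hnn hsup ha (hm i hi) hb' hr0 hrs hs1
  simp only [sub_nonneg]
  exact this

end

/-- symmetric difference quotients converge to the derivative. -/
lemma tendsto_sym_quot {F : ℝ → ℝ} {t L : ℝ} (hF : HasDerivAt F L t) {r s : ℕ → ℝ}
    (hrt : ∀ n, r n ≤ t) (hts : ∀ n, t ≤ s n) (hrs : ∀ n, r n < s n)
    (hr : Tendsto r atTop (𝓝 t)) (hs : Tendsto s atTop (𝓝 t)) :
    Tendsto (fun n => (F (s n) - F (r n)) / (s n - r n)) atTop (𝓝 L) := by
  rw [Metric.tendsto_atTop]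
  intro ε hε
  have hO := hF.isLittleO
  have hev : ∀ᶠ y in 𝓝 t, ‖F y - F t - (y - t) • L‖ ≤ (ε/2) * ‖y - t‖ :=
    hO.def (by linarith)
  have h1 : ∀ᶠ n in atTop, ‖F (r n) - F t - (r n - t) • L‖ ≤ (ε/2) * ‖r n - t‖ :=
    hr.eventually hev
  have h2 : ∀ᶠ n in atTop, ‖F (s n) - F t - (s n - t) • L‖ ≤ (ε/2) * ‖s n - t‖ :=
    hs.eventually hev
  obtain ⟨N, hN⟩ := (h1.and h2).exists_forall_of_atTop
  refine ⟨N, fun n hn => ?_⟩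
  obtain ⟨e1, e2⟩ := hN n hn
  have hpos : 0 < s n - r n := sub_pos.2 (hrs n)
  have e1' : |F (r n) - F t - (r n - t) * L| ≤ (ε/2) * (t - r n) := by
    have habs : |r n - t| = t - r n := by
      rw [abs_of_nonpos (by linarith [hrt n]), neg_sub]
    rw [Real.norm_eq_abs, Real.norm_eq_abs, smul_eq_mul, habs] at e1
    exact e1
  have e2' : |F (s n) - F t - (s n - t) * L| ≤ (ε/2) * (s n - t) := by
    have habs : |s n - t| = s n - t := abs_of_nonneg (by linarith [hts n])
    rw [Real.norm_eq_abs, Real.norm_eq_abs, smul_eq_mul, habs] at e2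
    exact e2
  have hnum : |F (s n) - F (r n) - L * (s n - r n)| ≤ (ε/2) * (s n - r n) := by
    have key : F (s n) - F (r n) - L * (s n - r n)
        = (F (s n) - F t - (s n - t) * L) - (F (r n) - F t - (r n - t) * L) := by ring
    rw [key]
    calc |(F (s n) - F t - (s n - t) * L) - (F (r n) - F t - (r n - t) * L)|
        ≤ |F (s n) - F t - (s n - t) * L| + |F (r n) - F t - (r n - t) * L| := abs_sub _ _
      _ ≤ (ε/2) * (s n - t) + (ε/2) * (t - r n) := add_le_add e2' e1'
      _ = (ε/2) * (s n - r n) := by ring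
  have heq : (F (s n) - F (r n)) / (s n - r n) - L
      = (F (s n) - F (r n) - L * (s n - r n)) / (s n - r n) := by
    field_simp
  rw [Real.dist_eq, heq, abs_div, abs_of_pos hpos]
  have hle : |F (s n) - F (r n) - L * (s n - r n)| / (s n - r n) ≤ ε/2 := by
    rw [div_le_iff₀ hpos]
    linarith [hnum]
  linarith

/-- a point of `(0,1)` avoiding the partition points lies strictly inside some cell. -/
lemma exists_cell {n : ℕ} {p : ℕ → ℝ} (hp0 : p 0 = 0) (hpn : p n = 1)
    {t : ℝ} (ht0 : 0 < t) (ht1 : t < 1)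
    (hbad : ∀ i, i ≤ n → p i ≠ t) :
    ∃ j, j < n ∧ p j < t ∧ t < p (j+1) := by
  classical
  set Fs := (Finset.range (n+1)).filter (fun i => p i < t) with hFs
  have h0mem : 0 ∈ Fs := by
    simp [hFs, Finset.mem_filter, hp0, ht0, Nat.succ_le_iff]
  have hne : Fs.Nonempty := ⟨0, h0mem⟩
  set j := Fs.max' hne with hj
  have hjmem : j ∈ Fs := Fs.max'_mem hne
  rw [hFs, Finset.mem_filter, Finset.mem_range] at hjmem
  obtain ⟨hjn, hjt⟩ := hjmem
  have hjn' : j ≤ n := Nat.lt_succ_iff.1 hjn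
  have hjne : j ≠ n := by
    intro h
    rw [h, hpn] at hjt
    linarith
  have hjlt : j < n := lt_of_le_of_ne hjn' hjne
  refine ⟨j, hjlt, hjt, ?_⟩
  have hnot : ¬ (p (j+1) < t) := by
    intro h
    have : j + 1 ∈ Fs := by
      simp [hFs, Finset.mem_filter, Finset.mem_range, Nat.succ_lt_succ hjlt, h]
    have := Fs.le_max' _ this
    omega
  have := hbad (j+1) (Nat.succ_le_of_lt hjlt)
  push_neg at hnot
  exact lt_of_le_of_ne hnot (Ne.symm this)

end AeDiagAux



/-- Differentiation of the reverse triangle inequality: if `T : H → [0,∞)` is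
superadditive (`T(r,s) + T(s,t) ≤ T(r,t)` for `0 ≤ r ≤ s ≤ t ≤ 1`), then for
Lebesgue-a.e. `t ∈ (0,1)` there is a finite limit `L` such that
`T(rₙ,sₙ)/(sₙ − rₙ) → L` for every choice of sequences `rₙ ≤ t ≤ sₙ`, `rₙ < sₙ`,
with `rₙ, sₙ → t`. -/
theorem ae_diagonal_derivative_of_superadditive
    (T : ℝ → ℝ → ℝ)
    (hnn : ∀ r s : ℝ, 0 ≤ r → r ≤ s → s ≤ 1 → 0 ≤ T r s)
    (hsup : ∀ r s t : ℝ, 0 ≤ r → r ≤ s → s ≤ t → t ≤ 1 → T r s + T s t ≤ T r t) :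
    ∀ᵐ t ∂(volume.restrict (Set.Ioo (0:ℝ) 1)), ∃ L : ℝ,
      ∀ r s : ℕ → ℝ, (∀ n, 0 ≤ r n) → (∀ n, s n ≤ 1) →
        (∀ n, r n ≤ t) → (∀ n, t ≤ s n) → (∀ n, r n < s n) →
        Filter.Tendsto r Filter.atTop (nhds t) →
        Filter.Tendsto s Filter.atTop (nhds t) →
        Filter.Tendsto (fun n => T (r n) (s n) / (s n - r n)) Filter.atTop (nhds L) := by
  classical
  -- choose partitions with small defect
  have hpart : ∀ k : ℕ, ∃ (n : ℕ) (p : ℕ → ℝ), p 0 = 0 ∧ p n = 1 ∧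
      (∀ i, i < n → p i ≤ p (i+1)) ∧
      (∑ i ∈ Finset.range n, AeDiagAux.EE T (p i) (p (i+1))) < (1/2:ℝ)^k :=
    fun k => AeDiagAux.exists_ptn_small hnn hsup (by positivity)
  choose nn pp hp0 hp1 hpm hps using hpart
  set G : ℝ → ℝ := fun x => AeDiagAux.gg T (AeDiagAux.cl x) with hGdef
  have hGmono : Monotone G := fun a b hab => AeDiagAux.gg_mono hnn hsup
    (AeDiagAux.cl_mem a).1 (AeDiagAux.cl_mono hab) (AeDiagAux.cl_mem b).2
  set H : ℕ → ℝ → ℝ := fun k => AeDiagAux.hh T (nn k) (pp k) with hHdef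
  have hHmono : ∀ k, Monotone (H k) := fun k =>
    AeDiagAux.hh_mono hnn hsup (hp0 k) (hp1 k) (hpm k)
  set μ : ℕ → Measure ℝ := fun k => ((hHmono k).stieltjesFunction).measure with hμdef
  set D : ℕ → ℝ → ℝ≥0∞ := fun k => (μ k).rnDeriv volume with hDdef
  -- total mass bound
  have hmass : ∀ k, μ k (Set.Ioo (0:ℝ) 1) ≤ ENNReal.ofReal ((1/2:ℝ)^k) := by
    intro k
    have h1 : μ k (Set.Ioo (0:ℝ) 1) ≤ μ k (Set.Ioc (-1:ℝ) 1) :=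
      measure_mono (fun x hx => ⟨by linarith [hx.1], hx.2.le⟩)
    have h2 : μ k (Set.Ioc (-1:ℝ) 1)
        = ENNReal.ofReal ((hHmono k).stieltjesFunction 1 - (hHmono k).stieltjesFunction (-1)) :=
      StieltjesFunction.measure_Ioc _ _ _
    have h2eq : H k 2 = ∑ i ∈ Finset.range (nn k), AeDiagAux.EE T (pp k i) (pp k (i+1)) :=
      AeDiagAux.hh_ge_one hnn hsup (hp0 k) (hp1 k) (hpm k) (by norm_num : (1:ℝ) ≤ 2)
    have hF1 : (hHmono k).stieltjesFunction 1 ≤ (1/2:ℝ)^k := by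
      rw [Monotone.stieltjesFunction_eq]
      exact ((hHmono k).rightLim_le (by norm_num : (1:ℝ) < 2)).trans
        (h2eq.le.trans (hps k).le)
    have hnegeq : H k (-1) = 0 :=
      AeDiagAux.hh_nonpos hnn hsup (hp0 k) (hp1 k) (hpm k) (by norm_num : (-1:ℝ) ≤ 0)
    have hF2 : (0:ℝ) ≤ (hHmono k).stieltjesFunction (-1) := by
      rw [Monotone.stieltjesFunction_eq]
      exact hnegeq.symm.le.trans ((hHmono k).le_rightLim (le_refl (-1:ℝ)))
    refine h1.trans (h2.le.trans ?_)
    exact ENNReal.ofReal_le_ofReal (by linarith)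
  -- the rnDerivs tend to 0 in k, a.e.
  have hmeasD : ∀ k, Measurable (D k) := fun k => Measure.measurable_rnDeriv _ _
  have hD3 : ∀ᵐ t ∂(volume.restrict (Set.Ioo (0:ℝ) 1)),
      Tendsto (fun k => (D k t).toReal) atTop (𝓝 0) := by
    have hint : ∫⁻ t in Set.Ioo (0:ℝ) 1, (∑' k, D k t) ∂volume ≠ ⊤ := by
      rw [lintegral_tsum (fun k => (hmeasD k).aemeasurable)]
      have hb : ∀ k, ∫⁻ t in Set.Ioo (0:ℝ) 1, D k t ∂volume ≤ ENNReal.ofReal ((1/2:ℝ)^k) :=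
        fun k => ((μ k).setLIntegral_rnDeriv_le _).trans (hmass k)
      refine ne_top_of_le_ne_top ?_ (ENNReal.tsum_le_tsum hb)
      have : ∀ k : ℕ, ENNReal.ofReal ((1/2:ℝ)^k) = (ENNReal.ofReal (1/2:ℝ))^k := fun k =>
        ENNReal.ofReal_pow (by norm_num : (0:ℝ) ≤ 1/2) k
      rw [tsum_congr this, ENNReal.tsum_geometric]
      refine ENNReal.inv_ne_top.2 ?_
      have hlt : ENNReal.ofReal (1/2:ℝ) < 1 := by
        rw [← ENNReal.ofReal_one]
        exact (ENNReal.ofReal_lt_ofReal_iff (by norm_num)).2 (by norm_num)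
      exact (tsub_pos_of_lt hlt).ne'
    have hae := ae_lt_top (Measurable.ennreal_tsum hmeasD) hint
    filter_upwards [hae] with t ht
    have h0 : Tendsto (fun k => D k t) atTop (𝓝 0) :=
      ENNReal.tendsto_atTop_zero_of_tsum_ne_top ht.ne
    have := (ENNReal.tendsto_toReal (by simp : (0:ℝ≥0∞) ≠ ⊤)).comp h0
    exact this
  -- a.e. differentiability
  have hGdiff := hGmono.ae_differentiableAt
  have hHder : ∀ᵐ t ∂volume, ∀ k : ℕ, HasDerivAt (H k) ((D k t).toReal) t := by
    rw [ae_all_iff]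
    exact fun k => (hHmono k).ae_hasDerivAt
  -- bad set of partition points
  have hcnt : Set.Countable (⋃ k : ℕ, pp k '' (Set.Iic (nn k))) :=
    Set.countable_iUnion fun k => (Set.to_countable _).image _
  have hbadvol : ∀ᵐ t ∂volume, t ∉ ⋃ k : ℕ, pp k '' (Set.Iic (nn k)) :=
    hcnt.ae_notMem volume
  filter_upwards [ae_restrict_of_ae hGdiff, ae_restrict_of_ae hHder, hD3,
    ae_restrict_of_ae hbadvol, ae_restrict_mem measurableSet_Ioo] with t hGd hHd hDt hB ht
  refine ⟨deriv G t, ?_⟩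
  intro r s hr0 hs1 hrt hts hrs hrT hsT
  have hs0 : ∀ n, 0 ≤ s n := fun n => ht.1.le.trans (hts n)
  have hr1 : ∀ n, r n ≤ 1 := fun n => (hrt n).trans ht.2.le
  -- part 1 : the gg-quotient converges to deriv G t
  have q1 : Tendsto (fun n => (G (s n) - G (r n)) / (s n - r n)) atTop (𝓝 (deriv G t)) :=
    AeDiagAux.tendsto_sym_quot hGd.hasDerivAt hrt hts hrs hrT hsT
  have q1' : Tendsto (fun n => (AeDiagAux.gg T (s n) - AeDiagAux.gg T (r n)) / (s n - r n))
      atTop (𝓝 (deriv G t)) := by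
    refine q1.congr (fun n => ?_)
    rw [hGdef]
    simp only []
    rw [AeDiagAux.cl_eq (hs0 n) (hs1 n), AeDiagAux.cl_eq (hr0 n) (hr1 n)]
  -- part 2 : the defect quotient converges to 0
  have q2 : Tendsto (fun n => AeDiagAux.EE T (r n) (s n) / (s n - r n)) atTop (𝓝 (0:ℝ)) := by
    rw [tendsto_order]
    constructor
    · intro a ha
      filter_upwards with n
      have h1 : 0 ≤ AeDiagAux.EE T (r n) (s n) / (s n - r n) :=
        div_nonneg (AeDiagAux.EE_nonneg hnn hsup (hr0 n) (hrs n).le (hs1 n))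
          (sub_nonneg.2 (hrs n).le)
      linarith
    · intro δ hδ
      obtain ⟨k, hk⟩ := (hDt.eventually (gt_mem_nhds hδ)).exists
      have hbadk : ∀ i, i ≤ nn k → pp k i ≠ t := by
        intro i hi heq
        exact hB (Set.mem_iUnion.2 ⟨k, ⟨i, hi, heq⟩⟩)
      obtain ⟨j, hjn, hjt, htj⟩ := AeDiagAux.exists_cell (hp0 k) (hp1 k) ht.1 ht.2 hbadk
      have hquot : Tendsto (fun n => (H k (s n) - H k (r n)) / (s n - r n)) atTop
          (𝓝 ((D k t).toReal)) :=
        AeDiagAux.tendsto_sym_quot (hHd k) hrt hts hrs hrT hsT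
      have hev1 : ∀ᶠ n in atTop, pp k j < r n := hrT.eventually (eventually_gt_nhds hjt)
      have hev2 : ∀ᶠ n in atTop, s n < pp k (j+1) := hsT.eventually (eventually_lt_nhds htj)
      have hev3 : ∀ᶠ n in atTop, (H k (s n) - H k (r n)) / (s n - r n) < δ :=
        hquot.eventually (gt_mem_nhds hk)
      filter_upwards [hev1, hev2, hev3] with n h1 h2 h3
      have hE : AeDiagAux.EE T (r n) (s n) ≤ H k (s n) - H k (r n) :=
        AeDiagAux.hh_key hnn hsup (hp0 k) (hp1 k) (hpm k) hjn h1.le (hrs n).le h2.le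
      have hpos : (0:ℝ) < s n - r n := sub_pos.2 (hrs n)
      calc AeDiagAux.EE T (r n) (s n) / (s n - r n)
          ≤ (H k (s n) - H k (r n)) / (s n - r n) := (div_le_div_iff_of_pos_right hpos).mpr hE
        _ < δ := h3
  -- combine
  have q3 := q1'.add q2
  rw [add_zero] at q3
  refine q3.congr (fun n => ?_)
  rw [← add_div]
  congr 1
  show AeDiagAux.gg T (s n) - AeDiagAux.gg T (r n) + AeDiagAux.EE T (r n) (s n) = T (r n) (s n)
  unfold AeDiagAux.EE
  ring
end

section
/- Let (M, ℓ) be a rough spacetime and let o ∈ M be such that for every x ≪ o and every t ∈ [0,1] there exists z ∈ M with ℓ(x,z) = t·ℓ(x,o) and ℓ(z,o) = (1−t)·ℓ(x,o). Then the function z ↦ max{ℓ(z,o), 0} is lower semicontinuous with respect to the chronological topology. -/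
/-- Lower semicontinuity of the Lorentz distance function to a point: in a rough
spacetime `(M, ℓ)`, if a point `o` admits `t`-intermediate points from every point of
its chronological past, then `z ↦ max (ℓ z o) 0` is lower semicontinuous with respect
to the chronological topology (the topology generated by the sets `I⁺(x)` and `I⁻(x)`). -/
theorem lsc_lorentz_distance {M : Type*} (ℓ : M → M → EReal)
    (hrange : ∀ x y : M, ℓ x y ≠ ⊥ → 0 ≤ ℓ x y)
    (hrefl : ∀ x : M, 0 ≤ ℓ x x)
    (hrt : ∀ x y z : M, 0 ≤ ℓ x y → 0 ≤ ℓ y z → ℓ x y + ℓ y z ≤ ℓ x z)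
    (o : M)
    (hint : ∀ x : M, 0 < ℓ x o → ∀ t ∈ Set.Icc (0:ℝ) 1, ∃ z : M,
      ℓ x z = (t : EReal) * ℓ x o ∧ ℓ z o = ((1 - t : ℝ) : EReal) * ℓ x o) :
    @LowerSemicontinuous M EReal
      (TopologicalSpace.generateFrom
        {s : Set M | ∃ x : M, s = {y | 0 < ℓ x y} ∨ s = {y | 0 < ℓ y x}})
      _ (fun z => max (ℓ z o) 0) := by
  letI τ : TopologicalSpace M := TopologicalSpace.generateFrom
      {s : Set M | ∃ x : M, s = {y | 0 < ℓ x y} ∨ s = {y | 0 < ℓ y x}}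
  intro z c hc
  rcases lt_or_ge c 0 with hc0 | hc0
  · exact Filter.Eventually.of_forall fun y => lt_of_lt_of_le hc0 (le_max_right _ _)
  -- now 0 ≤ c < ℓ z o
  have hczo : c < ℓ z o := by
    rcases max_cases (ℓ z o) 0 with ⟨h1, _⟩ | ⟨h1, _⟩
    · simpa [h1] using hc
    · exact absurd (lt_of_lt_of_le (by simpa [h1] using hc) hc0) (lt_irrefl _)
  have hpos : 0 < ℓ z o := lt_of_le_of_lt hc0 hczo
  -- choose t ∈ (0,1] with c < (1-t) * ℓ z o
  obtain ⟨t, ht0, ht1, htc⟩ : ∃ t : ℝ, 0 < t ∧ t ≤ 1 ∧ c < ((1 - t : ℝ) : EReal) * ℓ z o := by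
    rcases eq_or_ne (ℓ z o) ⊤ with htop | htop
    · refine ⟨1/2, by norm_num, by norm_num, ?_⟩
      rw [htop]
      rw [show ((1 - 1/2 : ℝ) : EReal) * ⊤ = ⊤ from EReal.coe_mul_top_of_pos (by norm_num)]
      exact lt_of_lt_of_le hczo le_top
    · have hbot : ℓ z o ≠ ⊥ := ne_bot_of_gt hpos
      set L : ℝ := (ℓ z o).toReal with hL
      have hLe : ℓ z o = (L : EReal) := (EReal.coe_toReal htop hbot).symm
      have hcbot : c ≠ ⊥ := by
        intro h; rw [h] at hc0; exact absurd hc0 (by simp)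
      have hctop : c ≠ ⊤ := ne_top_of_lt hczo
      set r : ℝ := c.toReal with hr
      have hce : c = (r : EReal) := (EReal.coe_toReal hctop hcbot).symm
      have hrL : r < L := by
        rw [hce, hLe] at hczo; exact_mod_cast hczo
      have hr0 : 0 ≤ r := by
        rw [hce] at hc0; exact_mod_cast hc0
      have hLpos : 0 < L := lt_of_le_of_lt hr0 hrL
      refine ⟨(1 - r / L) / 2, by have h := (div_lt_one hLpos).mpr hrL; linarith, ?_, ?_⟩
      · have : 0 ≤ r / L := by positivity
        linarith
      · rw [hLe, hce, ← EReal.coe_mul, EReal.coe_lt_coe_iff]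
        have : (1 - (1 - r / L) / 2) * L = (L + r) / 2 := by field_simp; ring
        rw [this]; linarith
  obtain ⟨w, hzw, hwo⟩ := hint z hpos t ⟨le_of_lt ht0, ht1⟩
  have hzwpos : 0 < ℓ z w := by
    rw [hzw]
    exact EReal.mul_pos (by exact_mod_cast ht0) hpos
  have hwo0 : 0 ≤ ℓ w o := le_of_lt (lt_of_le_of_lt hc0 (hwo ▸ htc))
  have hopen : IsOpen {y : M | 0 < ℓ y w} :=
    TopologicalSpace.GenerateOpen.basic _ ⟨w, Or.inr rfl⟩
  refine Filter.eventually_iff_exists_mem.mpr ⟨{y : M | 0 < ℓ y w},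
    hopen.mem_nhds hzwpos, fun y hy => ?_⟩
  have h1 : c < ℓ y w + ℓ w o := by
    calc c < ℓ w o := hwo ▸ htc
    _ ≤ ℓ y w + ℓ w o := le_add_of_nonneg_left (le_of_lt hy)
  exact lt_of_lt_of_le (lt_of_lt_of_le h1 (hrt y w o (le_of_lt hy) hwo0))
    (le_max_left _ _)
end

section
/- Let (M, ℓ) be a forward metric spacetime in which every point x satisfies x ∈ closure(I⁻(x)). Then for all x, y ∈ M, the inclusion I⁻(x) ⊆ I⁻(y) implies x ≤ y. -/
theorem chronology_determines_causality_general
    {M : Type*} [inst : TopologicalSpace M]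
    (ℓ : M → M → EReal)
    (hclosed : IsClosed {p : M × M | 0 ≤ ℓ p.1 p.2})
    (happrox : ∀ x : M, x ∈ closure {z : M | 0 < ℓ z x})
    (x y : M) (h : {z : M | 0 < ℓ z x} ⊆ {z : M | 0 < ℓ z y}) :
    0 ≤ ℓ x y := by
  have hcausal_past_closed : IsClosed {z : M | 0 ≤ ℓ z y} :=
    hclosed.preimage (continuous_id.prodMk continuous_const)
  have hpast_subset : {z : M | 0 < ℓ z x} ⊆ {z : M | 0 ≤ ℓ z y} :=
    fun z hz => show 0 ≤ ℓ z y from (h hz).le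
  exact hcausal_past_closed.closure_subset_iff.mpr hpast_subset (happrox x)

/-- Chronology determines causality: in a forward metric spacetime in which every point
can be approximated by points of its chronological past, the inclusion
`I⁻(x) ⊆ I⁻(y)` implies `x ≤ y`. -/
theorem chronology_determines_causality
    {M : Type*} [inst : TopologicalSpace M] [PolishSpace M]
    (ℓ : M → M → EReal)
    (htop : inst = TopologicalSpace.generateFrom
      {s : Set M | ∃ x : M, s = {y | 0 < ℓ x y} ∨ s = {y | 0 < ℓ y x}})
    (hrange : ∀ x y : M, ℓ x y ≠ ⊥ → 0 ≤ ℓ x y)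
    (hrefl : ∀ x : M, 0 ≤ ℓ x x)
    (hrt : ∀ x y z : M, 0 ≤ ℓ x y → 0 ≤ ℓ y z → ℓ x y + ℓ y z ≤ ℓ x z)
    (hclosed : IsClosed {p : M × M | 0 ≤ ℓ p.1 p.2})
    (hforward : ∀ (y : ℕ → M) (x z : M), (∀ i, 0 ≤ ℓ x (y i)) →
      (∀ i, 0 ≤ ℓ (y i) (y (i+1))) → (∀ i, 0 ≤ ℓ (y i) z) →
      ∃ p : M, Filter.Tendsto y Filter.atTop (nhds p))
    (happrox : ∀ x : M, x ∈ closure {z : M | 0 < ℓ z x})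
    (x y : M) (h : {z : M | 0 < ℓ z x} ⊆ {z : M | 0 < ℓ z y}) :
    0 ≤ ℓ x y :=
  chronology_determines_causality_general (inst := inst) ℓ hclosed happrox x y h
end

section
/- Let (M, ℓ) be a forward metric spacetime in which every x ∈ M lies in the closure of I⁻(x). If (xₙ) is a ≤-bounded nondecreasing sequence converging topologically to x, then x is the ≤-supremum of (xₙ): xₙ ≤ x for all n, and every y with xₙ ≤ y for all n satisfies x ≤ y. -/
open Filter Topology

/-!
The causal relation `0 ≤ ℓ x y` is a preorder (reflexive, and transitive by the reverse
triangle inequality) whose graph is closed. Along a nondecreasing sequence, `xₙ ≤ xₘ` holds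
for all `m ≥ n`, so passing to the limit in `m` gives `xₙ ≤ x`; and an upper bound `y` of all
`xₙ` passes to the limit in the first argument, giving `x ≤ y`.
-/

section ClosedRelation

variable {X ι : Type*} [TopologicalSpace X] {r : X → X → Prop} {l : Filter ι} [l.NeBot]
  {f : ι → X} {x : X}

theorem IsClosed.rel_of_tendsto_right (hr : IsClosed {p : X × X | r p.1 p.2}) {a : X}
    (hf : Tendsto f l (𝓝 x)) (h : ∀ᶠ i in l, r a (f i)) : r a x :=
  hr.mem_of_tendsto (tendsto_const_nhds.prodMk_nhds hf) h

theorem IsClosed.rel_of_tendsto_left (hr : IsClosed {p : X × X | r p.1 p.2}) {b : X}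
    (hf : Tendsto f l (𝓝 x)) (h : ∀ᶠ i in l, r (f i) b) : r x b :=
  hr.mem_of_tendsto (hf.prodMk_nhds tendsto_const_nhds) h

end ClosedRelation

section CausalRelation

variable {M : Type*} {ℓ : M → M → EReal}

theorem causal_trans_of_reverse_triangle
    (hrt : ∀ x y z : M, 0 ≤ ℓ x y → 0 ≤ ℓ y z → ℓ x y + ℓ y z ≤ ℓ x z) {x y z : M}
    (hxy : 0 ≤ ℓ x y) (hyz : 0 ≤ ℓ y z) : 0 ≤ ℓ x z :=
  (add_nonneg hxy hyz).trans (hrt x y z hxy hyz)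

theorem causal_of_le_of_causal_succ (hrefl : ∀ x : M, 0 ≤ ℓ x x)
    (hrt : ∀ x y z : M, 0 ≤ ℓ x y → 0 ≤ ℓ y z → ℓ x y + ℓ y z ≤ ℓ x z) {xs : ℕ → M}
    (hmono : ∀ n, 0 ≤ ℓ (xs n) (xs (n + 1))) {n m : ℕ} (hnm : n ≤ m) :
    0 ≤ ℓ (xs n) (xs m) :=
  have : Std.Refl fun a b : M => 0 ≤ ℓ a b := ⟨hrefl⟩
  have : IsTrans M fun a b : M => 0 ≤ ℓ a b := ⟨fun _ _ _ => causal_trans_of_reverse_triangle hrt⟩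
  Nat.rel_of_forall_rel_succ_of_le (fun a b : M => 0 ≤ ℓ a b) hmono hnm

end CausalRelation

theorem limit_is_order_supremum_general
    {M : Type*} [inst : TopologicalSpace M]
    (ℓ : M → M → EReal)
    (hrefl : ∀ x : M, 0 ≤ ℓ x x)
    (hrt : ∀ x y z : M, 0 ≤ ℓ x y → 0 ≤ ℓ y z → ℓ x y + ℓ y z ≤ ℓ x z)
    (hclosed : IsClosed {p : M × M | 0 ≤ ℓ p.1 p.2})
    (x : M) (xs : ℕ → M)
    (hmono : ∀ n, 0 ≤ ℓ (xs n) (xs (n+1)))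
    (hlim : Filter.Tendsto xs Filter.atTop (nhds x)) :
    (∀ n, 0 ≤ ℓ (xs n) x) ∧ ∀ y : M, (∀ n, 0 ≤ ℓ (xs n) y) → 0 ≤ ℓ x y :=
  ⟨fun n => hclosed.rel_of_tendsto_right (r := fun a b => 0 ≤ ℓ a b) hlim
      (eventually_atTop.2 ⟨n, fun _ => causal_of_le_of_causal_succ hrefl hrt hmono⟩),
    fun _ hy => hclosed.rel_of_tendsto_left (r := fun a b => 0 ≤ ℓ a b) hlim (.of_forall hy)⟩

/-- Limit from the past versus order supremum: in a forward metric spacetime in which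
every point lies in the closure of its chronological past, if `(xₙ)` is a `≤`-bounded
nondecreasing sequence converging topologically to `x`, then `x` is the `≤`-supremum
of `(xₙ)`. -/
theorem limit_is_order_supremum
    {M : Type*} [inst : TopologicalSpace M] [PolishSpace M]
    (ℓ : M → M → EReal)
    (htop : inst = TopologicalSpace.generateFrom
      {s : Set M | ∃ x : M, s = {y | 0 < ℓ x y} ∨ s = {y | 0 < ℓ y x}})
    (hrange : ∀ x y : M, ℓ x y ≠ ⊥ → 0 ≤ ℓ x y)
    (hrefl : ∀ x : M, 0 ≤ ℓ x x)
    (hrt : ∀ x y z : M, 0 ≤ ℓ x y → 0 ≤ ℓ y z → ℓ x y + ℓ y z ≤ ℓ x z)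
    (hclosed : IsClosed {p : M × M | 0 ≤ ℓ p.1 p.2})
    (hforward : ∀ (y : ℕ → M) (a b : M), (∀ i, 0 ≤ ℓ a (y i)) →
      (∀ i, 0 ≤ ℓ (y i) (y (i+1))) → (∀ i, 0 ≤ ℓ (y i) b) →
      ∃ p : M, Filter.Tendsto y Filter.atTop (nhds p))
    (happrox : ∀ x : M, x ∈ closure {z : M | 0 < ℓ z x})
    (x : M) (xs : ℕ → M)
    (hmono : ∀ n, 0 ≤ ℓ (xs n) (xs (n+1)))
    (hbdd : ∃ z : M, ∀ n, 0 ≤ ℓ (xs n) z)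
    (hlim : Filter.Tendsto xs Filter.atTop (nhds x)) :
    (∀ n, 0 ≤ ℓ (xs n) x) ∧ ∀ y : M, (∀ n, 0 ≤ ℓ (xs n) y) → 0 ≤ ℓ x y :=
  limit_is_order_supremum_general (inst := inst) ℓ hrefl hrt hclosed x xs hmono hlim
end

section
/- Let γ : [0,1] → M be a left-continuous causal curve in a forward metric spacetime (M, ℓ) with ℓ upper semicontinuous and max{ℓ,0} continuous and real-valued. Suppose γ satisfies 0 < (t−s)·ℓ(γ₀,γ₁) ≤ ℓ(γₛ,γₜ) < ∞ for all 0 ≤ s < t ≤ 1. Then equality holds: ℓ(γₛ,γₜ) = (t−s)·ℓ(γ₀,γ₁) for all s < t. -/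
open Filter Topology Set

/-! Along `γ`, the pieces `[0,s]`, `[s,t]`, `[t,1]` have lengths at least `s·L`, `(t-s)·L`
and `(1-t)·L`, where `L = ℓ(γ₀,γ₁)`. By the reverse triangle inequality their sum is at most `L`,
which is also the sum of the three lower bounds, so every bound is attained. -/

theorem EReal.eq_of_le_of_add_add_le {u v w : ℝ} {x : EReal} (hw : (w : EReal) ≤ x)
    (h : u + x + v ≤ ((u + w + v : ℝ) : EReal)) : x = w := by
  have hx_ne_top : x ≠ ⊤ := by
    rintro rfl
    norm_cast at h
  lift x to ℝ using ⟨hx_ne_top, ne_bot_of_le_ne_bot (EReal.coe_ne_bot w) hw⟩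
  norm_cast at hw h ⊢
  linarith

section ReverseTriangle

variable {M : Type*} {ℓ : M → M → EReal}

theorem add_add_le_of_reverse_triangle
    (hrt : ∀ x y z : M, 0 ≤ ℓ x y → 0 ≤ ℓ y z → ℓ x y + ℓ y z ≤ ℓ x z) {a b c d : M}
    (hab : 0 ≤ ℓ a b) (hbc : 0 ≤ ℓ b c) (hcd : 0 ≤ ℓ c d) :
    ℓ a b + ℓ b c + ℓ c d ≤ ℓ a d := by
  have hac : ℓ a b + ℓ b c ≤ ℓ a c := hrt a b c hab hbc
  calc ℓ a b + ℓ b c + ℓ c d ≤ ℓ a c + ℓ c d := by gcongr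
    _ ≤ ℓ a d := hrt a c d ((add_nonneg hab hbc).trans hac) hcd

theorem mul_le_of_le_of_forall_lt (hrefl : ∀ x : M, 0 ≤ ℓ x x) {γ : ℝ → M}
    (hgeo : ∀ s t : ℝ, 0 ≤ s → s < t → t ≤ 1 →
      ((t - s : ℝ) : EReal) * ℓ (γ 0) (γ 1) ≤ ℓ (γ s) (γ t))
    {s t : ℝ} (hs : 0 ≤ s) (hst : s ≤ t) (ht : t ≤ 1) :
    ((t - s : ℝ) : EReal) * ℓ (γ 0) (γ 1) ≤ ℓ (γ s) (γ t) := by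
  rcases hst.lt_or_eq with hst | rfl
  · exact hgeo s t hs hst ht
  · simpa using hrefl (γ s)

end ReverseTriangle

theorem geodesic_equality_general
    {M : Type*}
    (ℓ : M → M → EReal)
    (hrefl : ∀ x : M, 0 ≤ ℓ x x)
    (hrt : ∀ x y z : M, 0 ≤ ℓ x y → 0 ≤ ℓ y z → ℓ x y + ℓ y z ≤ ℓ x z)
    (γ : ℝ → M)
    (hgeo : ∀ s t : ℝ, 0 ≤ s → s < t → t ≤ 1 →
      0 < ((t - s : ℝ) : EReal) * ℓ (γ 0) (γ 1) ∧
      ((t - s : ℝ) : EReal) * ℓ (γ 0) (γ 1) ≤ ℓ (γ s) (γ t) ∧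
      ℓ (γ s) (γ t) < ⊤) :
    ∀ s t : ℝ, 0 ≤ s → s < t → t ≤ 1 →
      ℓ (γ s) (γ t) = ((t - s : ℝ) : EReal) * ℓ (γ 0) (γ 1) := by
  intro s t hs hst ht
  obtain ⟨hL_pos, -, hL_lt_top⟩ := hgeo 0 1 le_rfl one_pos le_rfl
  have hL_pos : (0 : EReal) < ℓ (γ 0) (γ 1) := by simpa using hL_pos
  have lower {p q : ℝ} (hp : 0 ≤ p) (hpq : p ≤ q) (hq : q ≤ 1) :=
    mul_le_of_le_of_forall_lt hrefl (fun s t hs hst ht ↦ (hgeo s t hs hst ht).2.1) hp hpq hq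
  have causal {p q : ℝ} (hp : 0 ≤ p) (hpq : p ≤ q) (hq : q ≤ 1) : 0 ≤ ℓ (γ p) (γ q) :=
    (mul_nonneg (EReal.coe_nonneg.2 (sub_nonneg.2 hpq)) hL_pos.le).trans (lower hp hpq hq)
  have hchain : ℓ (γ 0) (γ s) + ℓ (γ s) (γ t) + ℓ (γ t) (γ 1) ≤ ℓ (γ 0) (γ 1) :=
    add_add_le_of_reverse_triangle hrt (causal le_rfl hs (by linarith)) (causal hs hst.le ht)
      (causal (by linarith) ht le_rfl)
  lift ℓ (γ 0) (γ 1) to ℝ using ⟨hL_lt_top.ne, hL_pos.ne_bot⟩ with L hL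
  refine EReal.eq_of_le_of_add_add_le (u := s * L) (v := (1 - t) * L) (lower hs hst.le ht) ?_
  calc ((s * L : ℝ) : EReal) + ℓ (γ s) (γ t) + ((1 - t) * L : ℝ)
      ≤ ℓ (γ 0) (γ s) + ℓ (γ s) (γ t) + ℓ (γ t) (γ 1) := by
        gcongr
        · simpa using lower le_rfl hs (by linarith)
        · exact lower (by linarith) ht le_rfl
    _ ≤ L := hL ▸ hchain
    _ = ((s * L + (t - s) * L + (1 - t) * L : ℝ) : EReal) := by congr 1; ring

/-- If a left-continuous causal curve `γ` in a forward metric spacetime (with `ℓ` upper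
semicontinuous and `max ℓ 0` continuous and real-valued) satisfies
`0 < (t-s)·ℓ(γ₀,γ₁) ≤ ℓ(γₛ,γₜ) < ∞` for all `0 ≤ s < t ≤ 1`, then equality
`ℓ(γₛ,γₜ) = (t-s)·ℓ(γ₀,γ₁)` holds for all such `s < t`. -/
theorem geodesic_equality
    {M : Type*} [inst : TopologicalSpace M] [PolishSpace M]
    (ℓ : M → M → EReal)
    (htop : inst = TopologicalSpace.generateFrom
      {s : Set M | ∃ x : M, s = {y | 0 < ℓ x y} ∨ s = {y | 0 < ℓ y x}})
    (hrange : ∀ x y : M, ℓ x y ≠ ⊥ → 0 ≤ ℓ x y)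
    (hrefl : ∀ x : M, 0 ≤ ℓ x x)
    (hrt : ∀ x y z : M, 0 ≤ ℓ x y → 0 ≤ ℓ y z → ℓ x y + ℓ y z ≤ ℓ x z)
    (hclosed : IsClosed {p : M × M | 0 ≤ ℓ p.1 p.2})
    (hforward : ∀ (y : ℕ → M) (a b : M), (∀ i, 0 ≤ ℓ a (y i)) →
      (∀ i, 0 ≤ ℓ (y i) (y (i+1))) → (∀ i, 0 ≤ ℓ (y i) b) →
      ∃ p : M, Filter.Tendsto y Filter.atTop (nhds p))
    (husc : UpperSemicontinuous fun p : M × M => ℓ p.1 p.2)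
    (hcont : Continuous fun p : M × M => max (ℓ p.1 p.2) 0)
    (hreal : ∀ p : M × M, max (ℓ p.1 p.2) 0 ≠ ⊤)
    (γ : ℝ → M)
    (hcausal : ∀ s t : ℝ, 0 ≤ s → s ≤ t → t ≤ 1 → 0 ≤ ℓ (γ s) (γ t))
    (hleft : ∀ t ∈ Set.Ioc (0:ℝ) 1,
      Filter.Tendsto γ (nhdsWithin t (Set.Iio t)) (nhds (γ t)))
    (hgeo : ∀ s t : ℝ, 0 ≤ s → s < t → t ≤ 1 →
      0 < ((t - s : ℝ) : EReal) * ℓ (γ 0) (γ 1) ∧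
      ((t - s : ℝ) : EReal) * ℓ (γ 0) (γ 1) ≤ ℓ (γ s) (γ t) ∧
      ℓ (γ s) (γ t) < ⊤) :
    ∀ s t : ℝ, 0 ≤ s → s < t → t ≤ 1 →
      ℓ (γ s) (γ t) = ((t - s : ℝ) : EReal) * ℓ (γ 0) (γ 1) :=
  geodesic_equality_general ℓ hrefl hrt γ hgeo
end

section
/- Let M carry a transitive reflexive relation ≤ and let f : M → ℝ∪{±∞} be nondecreasing along ≤. Define f⁺(y) = inf{f(z) : y ≪ z} and f⁻(y) = sup{f(x) : x ≪ y} (with inf∅ = +∞, sup∅ = −∞), where ≪ is a transitive relation satisfying push-up (x ≪ y ≤ z ⇒ x ≪ z and x ≤ y ≪ z ⇒ x ≪ z). Then f⁻ ≤ f ≤ f⁺ on M, both f⁺ and f⁻ are nondecreasing along ≤, and the set {y : f⁻(y) < f⁺(y)} is contained in a countable union of ≪-antichains (achronal sets). -/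
/-- Chronological almost continuity of causal functions: for a causal function `f`
(nondecreasing along `≤`), the upper and lower representatives
`f⁺(y) = inf {f z : y ≪ z}` and `f⁻(y) = sup {f x : x ≪ y}` satisfy `f⁻ ≤ f ≤ f⁺`,
are both nondecreasing along `≤`, and the set where `f⁻ < f⁺` is contained in a
countable union of achronal sets (`≪`-antichains). -/
theorem causal_function_regularization
    {M : Type*} (le ll : M → M → Prop)
    (hle_trans : Transitive le) (hle_refl : Reflexive le)
    (hll_trans : Transitive ll)
    (hll_le : ∀ x y : M, ll x y → le x y)
    (hpush1 : ∀ x y z : M, ll x y → le y z → ll x z)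
    (hpush2 : ∀ x y z : M, le x y → ll y z → ll x z)
    (f : M → EReal) (hf : ∀ x y : M, le x y → f x ≤ f y) :
    (∀ y : M, sSup (f '' {x | ll x y}) ≤ f y ∧ f y ≤ sInf (f '' {z | ll y z})) ∧
    (∀ x y : M, le x y →
      sInf (f '' {z | ll x z}) ≤ sInf (f '' {z | ll y z}) ∧
      sSup (f '' {w | ll w x}) ≤ sSup (f '' {w | ll w y})) ∧
    (∃ S : ℕ → Set M, (∀ n, ∀ a ∈ S n, ∀ b ∈ S n, ¬ ll a b) ∧
      {y : M | sSup (f '' {x | ll x y}) < sInf (f '' {z | ll y z})} ⊆ ⋃ n, S n) := by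
  refine ⟨?_, ?_, ?_⟩
  · intro y
    constructor
    · apply sSup_le
      rintro b ⟨x, hx, rfl⟩
      exact hf x y (hll_le x y hx)
    · apply le_sInf
      rintro b ⟨z, hz, rfl⟩
      exact hf y z (hll_le y z hz)
  · intro x y hxy
    exact ⟨sInf_le_sInf (Set.image_mono (f := f) fun z hz => hpush2 x y z hxy hz),
      sSup_le_sSup (Set.image_mono (f := f) fun w hw => hpush1 w x y hw hxy)⟩
  · classical
    set fp : M → EReal := fun y => sInf (f '' {z | ll y z}) with hfp
    set fm : M → EReal := fun y => sSup (f '' {x | ll x y}) with hfm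
    let T : ℚ ⊕ ℚ → Set M := Sum.elim
      (fun q => {y | fm y < ((q : ℝ) : EReal) ∧ ((q : ℝ) : EReal) < f y})
      (fun q => {y | f y < ((q : ℝ) : EReal) ∧ ((q : ℝ) : EReal) < fp y})
    refine ⟨fun n => T (Denumerable.ofNat (ℚ ⊕ ℚ) n), ?_, ?_⟩
    · intro n a ha b hb hab
      rcases hn : Denumerable.ofNat (ℚ ⊕ ℚ) n with q | q <;>
        simp only [hn, T, Sum.elim_inl, Sum.elim_inr, Set.mem_setOf_eq] at ha hb
      · -- fm a < q < f a, fm b < q < f b, but f a ≤ fm b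
        have h1 : f a ≤ fm b := le_sSup ⟨a, hab, rfl⟩
        exact absurd ((ha.2.trans_le h1).trans hb.1) (lt_irrefl _)
      · -- f a < q < fp a, but fp a ≤ f b < q
        have h1 : fp a ≤ f b := sInf_le ⟨b, hab, rfl⟩
        exact absurd ((ha.2.trans_le h1).trans hb.1) (lt_irrefl _)
    · intro y hy
      have h1 : fm y ≤ f y := sSup_le (by rintro b ⟨x, hx, rfl⟩; exact hf x y (hll_le x y hx))
      have h2 : f y ≤ fp y := le_sInf (by rintro b ⟨z, hz, rfl⟩; exact hf y z (hll_le y z hz))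
      have hy' : fm y < fp y := hy
      rcases lt_or_ge (fm y) (f y) with h | h
      · obtain ⟨q, hq1, hq2⟩ := EReal.exists_rat_btwn_of_lt h
        refine Set.mem_iUnion.2 ⟨@Encodable.encode (ℚ ⊕ ℚ) (Denumerable.sum.toEncodable) (Sum.inl q), ?_⟩
        show y ∈ T (Denumerable.ofNat (ℚ ⊕ ℚ) (@Encodable.encode (ℚ ⊕ ℚ) (Denumerable.sum.toEncodable) (Sum.inl q)))
        rw [Denumerable.ofNat_encode]
        exact ⟨hq1, hq2⟩
      · have h' : f y < fp y := lt_of_le_of_lt (le_antisymm h1 h ▸ le_refl _) hy'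
        obtain ⟨q, hq1, hq2⟩ := EReal.exists_rat_btwn_of_lt h'
        refine Set.mem_iUnion.2 ⟨@Encodable.encode (ℚ ⊕ ℚ) (Denumerable.sum.toEncodable) (Sum.inr q), ?_⟩
        show y ∈ T (Denumerable.ofNat (ℚ ⊕ ℚ) (@Encodable.encode (ℚ ⊕ ℚ) (Denumerable.sum.toEncodable) (Sum.inr q)))
        rw [Denumerable.ofNat_encode]
        exact ⟨hq1, hq2⟩
end

section
/- Let ‖·‖ : V → {−∞}∪[0,∞) be a hyperbolic norm on a real vector space V (concave, positively 1-homogeneous, ‖0‖ = 0) with future cone F = {x : ‖x‖ ≥ 0}. If the parallelogram identity ‖x+2y‖² + ‖x‖² = 2‖x+y‖² + 2‖y‖² holds for all x, y ∈ F, then the form (x,y) := ½(‖x+y‖² − ‖x‖² − ‖y‖²) is positively bilinear on F: it is symmetric, additive in each argument on F, and satisfies (λx, y) = λ(x,y) for all λ ≥ 0 and x, y ∈ F. -/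
/-- Squeeze lemma: a monotone nonnegative function on `[0,∞)` whose square agrees
with the quadratic `t ↦ t²a + b + tD` at all nonnegative rationals agrees with it
at every positive real. -/
lemma hyperbolic_squeeze_aux (f : ℝ → ℝ) (a b D c : ℝ) (hc : 0 < c)
    (hmono : ∀ s t : ℝ, 0 ≤ s → s ≤ t → f s ≤ f t)
    (hnn : ∀ t : ℝ, 0 ≤ t → 0 ≤ f t)
    (hQ : ∀ r : ℚ, 0 ≤ r → f (r : ℝ) ^ 2 = (r : ℝ) ^ 2 * a + b + (r : ℝ) * D)
    (ha0 : 0 ≤ a) :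
    f c ^ 2 = c ^ 2 * a + b + c * D := by
  obtain ⟨K, hK⟩ : ∃ K : ℝ, K = (2 * c + 1) * a + |D| + 1 := ⟨_, rfl⟩
  have hK1 : (1 : ℝ) ≤ K := by
    have h1 : 0 ≤ (2 * c + 1) * a := by positivity
    have h2 : 0 ≤ |D| := abs_nonneg _
    rw [hK]; linarith
  have hKpos : (0 : ℝ) < K := by linarith
  apply le_antisymm
  · -- upper bound
    refine le_of_forall_pos_le_add ?_
    intro ε hε
    obtain ⟨δ, hδdef⟩ : ∃ δ : ℝ, δ = min 1 (ε / K) := ⟨_, rfl⟩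
    have hδpos : 0 < δ := hδdef ▸ lt_min (by norm_num) (div_pos hε hKpos)
    have hδ1 : δ ≤ 1 := hδdef ▸ min_le_left _ _
    have hδ2 : δ ≤ ε / K := hδdef ▸ min_le_right _ _
    have hδε : δ * K ≤ ε := by
      calc δ * K ≤ (ε / K) * K := mul_le_mul_of_nonneg_right hδ2 hKpos.le
      _ = ε := div_mul_cancel₀ ε (ne_of_gt hKpos)
    obtain ⟨r, hr1, hr2⟩ := exists_rat_btwn (show c < c + δ by linarith)
    have hr0 : (0:ℝ) ≤ (r:ℝ) := le_trans hc.le hr1.le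
    have hrq : 0 ≤ r := by exact_mod_cast hr0
    have hmle := hmono c r hc.le hr1.le
    have h1 : f c ^ 2 ≤ f (r:ℝ) ^ 2 := by nlinarith [hnn c hc.le]
    rw [hQ r hrq] at h1
    have hrc : (r:ℝ) - c ≤ δ := by linarith
    have hrc0 : 0 ≤ (r:ℝ) - c := by linarith
    have h2 : ((r:ℝ) ^ 2 - c ^ 2) * a ≤ ((r:ℝ) - c) * ((2 * c + 1) * a) := by
      have hsum : (r:ℝ) + c ≤ 2 * c + 1 := by linarith
      nlinarith [mul_nonneg (mul_nonneg hrc0 ha0) (sub_nonneg.2 hsum)]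
    have h3 : ((r:ℝ) - c) * D ≤ ((r:ℝ) - c) * |D| :=
      mul_le_mul_of_nonneg_left (le_abs_self D) hrc0
    have h4 : ((r:ℝ) - c) * ((2 * c + 1) * a) + ((r:ℝ) - c) * |D| ≤ δ * K := by
      have hfac : 0 ≤ (2 * c + 1) * a + |D| := by positivity
      have h5 : ((r:ℝ) - c) * ((2 * c + 1) * a + |D|) ≤ δ * ((2 * c + 1) * a + |D|) :=
        mul_le_mul_of_nonneg_right hrc hfac
      have hKge : (2 * c + 1) * a + |D| ≤ K := by rw [hK]; linarith
      have h6 : δ * ((2 * c + 1) * a + |D|) ≤ δ * K :=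
        mul_le_mul_of_nonneg_left hKge hδpos.le
      have e : ((r:ℝ) - c) * ((2 * c + 1) * a + |D|)
          = ((r:ℝ) - c) * ((2 * c + 1) * a) + ((r:ℝ) - c) * |D| := by ring
      linarith
    have expand : (r:ℝ) ^ 2 * a + (r:ℝ) * D
        = c ^ 2 * a + c * D + ((r:ℝ) ^ 2 - c ^ 2) * a + ((r:ℝ) - c) * D := by ring
    linarith
  · -- lower bound
    refine le_of_forall_pos_le_add ?_
    intro ε hε
    obtain ⟨δ, hδdef⟩ : ∃ δ : ℝ, δ = min c (ε / K) := ⟨_, rfl⟩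
    have hδpos : 0 < δ := hδdef ▸ lt_min hc (div_pos hε hKpos)
    have hδc : δ ≤ c := hδdef ▸ min_le_left _ _
    have hδ2 : δ ≤ ε / K := hδdef ▸ min_le_right _ _
    have hδε : δ * K ≤ ε := by
      calc δ * K ≤ (ε / K) * K := mul_le_mul_of_nonneg_right hδ2 hKpos.le
      _ = ε := div_mul_cancel₀ ε (ne_of_gt hKpos)
    obtain ⟨r, hr1, hr2⟩ := exists_rat_btwn (show c - δ < c by linarith)
    have hr0 : (0:ℝ) ≤ (r:ℝ) := by linarith
    have hrq : 0 ≤ r := by exact_mod_cast hr0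
    have hmle := hmono r c hr0 hr2.le
    have h1 : f (r:ℝ) ^ 2 ≤ f c ^ 2 := by nlinarith [hnn _ hr0]
    rw [hQ r hrq] at h1
    have hrc : c - (r:ℝ) ≤ δ := by linarith
    have hrc0 : 0 ≤ c - (r:ℝ) := by linarith
    have h2 : (c ^ 2 - (r:ℝ) ^ 2) * a ≤ (c - (r:ℝ)) * ((2 * c + 1) * a) := by
      have hsum : (r:ℝ) + c ≤ 2 * c + 1 := by linarith
      nlinarith [mul_nonneg (mul_nonneg hrc0 ha0) (sub_nonneg.2 hsum)]
    have h3 : (c - (r:ℝ)) * D ≤ (c - (r:ℝ)) * |D| :=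
      mul_le_mul_of_nonneg_left (le_abs_self D) hrc0
    have h4 : (c - (r:ℝ)) * ((2 * c + 1) * a) + (c - (r:ℝ)) * |D| ≤ δ * K := by
      have hfac : 0 ≤ (2 * c + 1) * a + |D| := by positivity
      have h5 : (c - (r:ℝ)) * ((2 * c + 1) * a + |D|) ≤ δ * ((2 * c + 1) * a + |D|) :=
        mul_le_mul_of_nonneg_right hrc hfac
      have hKge : (2 * c + 1) * a + |D| ≤ K := by rw [hK]; linarith
      have h6 : δ * ((2 * c + 1) * a + |D|) ≤ δ * K :=
        mul_le_mul_of_nonneg_left hKge hδpos.le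
      have e : (c - (r:ℝ)) * ((2 * c + 1) * a + |D|)
          = (c - (r:ℝ)) * ((2 * c + 1) * a) + (c - (r:ℝ)) * |D| := by ring
      linarith
    have expand : c ^ 2 * a + c * D
        = (r:ℝ) ^ 2 * a + (r:ℝ) * D + (c ^ 2 - (r:ℝ) ^ 2) * a + (c - (r:ℝ)) * D := by ring
    linarith

/-- Parallelogram law implies positive bilinearity of the polarization on the future
cone of a hyperbolic norm: if `N : V → {−∞} ∪ [0,∞)` is concave, positively
1-homogeneous and vanishes at `0`, and the parallelogram identity
`‖x+2y‖² + ‖x‖² = 2‖x+y‖² + 2‖y‖²` holds on `F = {N ≥ 0}`, then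
`(x,y) := ½(‖x+y‖² − ‖x‖² − ‖y‖²)` is symmetric, additive in each argument on `F`,
and positively homogeneous on `F`. -/
theorem parallelogram_implies_positive_bilinearity
    {V : Type*} [AddCommGroup V] [Module ℝ V]
    (N : V → EReal)
    (h0 : N 0 = 0)
    (hne_top : ∀ v : V, N v ≠ ⊤)
    (hrange : ∀ v : V, N v = ⊥ ∨ 0 ≤ N v)
    (hhom : ∀ (c : ℝ) (v : V), 0 ≤ c → N (c • v) = (c : EReal) * N v)
    (hconc : ∀ (v w : V) (t : ℝ), 0 ≤ t → t ≤ 1 →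
      (t : EReal) * N v + ((1 - t : ℝ) : EReal) * N w ≤ N (t • v + (1 - t) • w))
    (hpar : ∀ x y : V, 0 ≤ N x → 0 ≤ N y →
      (N (x + (2:ℝ) • y)).toReal ^ 2 + (N x).toReal ^ 2
        = 2 * (N (x + y)).toReal ^ 2 + 2 * (N y).toReal ^ 2) :
    (∀ x y : V, 0 ≤ N x → 0 ≤ N y →
      ((N (x + y)).toReal ^ 2 - (N x).toReal ^ 2 - (N y).toReal ^ 2) / 2
        = ((N (y + x)).toReal ^ 2 - (N y).toReal ^ 2 - (N x).toReal ^ 2) / 2) ∧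
    (∀ x y z : V, 0 ≤ N x → 0 ≤ N y → 0 ≤ N z →
      ((N (x + y + z)).toReal ^ 2 - (N (x + y)).toReal ^ 2 - (N z).toReal ^ 2) / 2
        = ((N (x + z)).toReal ^ 2 - (N x).toReal ^ 2 - (N z).toReal ^ 2) / 2
          + ((N (y + z)).toReal ^ 2 - (N y).toReal ^ 2 - (N z).toReal ^ 2) / 2) ∧
    (∀ (c : ℝ) (x y : V), 0 ≤ c → 0 ≤ N x → 0 ≤ N y →
      ((N (c • x + y)).toReal ^ 2 - (N (c • x)).toReal ^ 2 - (N y).toReal ^ 2) / 2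
        = c * (((N (x + y)).toReal ^ 2 - (N x).toReal ^ 2 - (N y).toReal ^ 2) / 2)) := by
  -- basic facts
  have hfin : ∀ v : V, 0 ≤ N v → N v = ((N v).toReal : EReal) := by
    intro v hv
    rw [EReal.coe_toReal (hne_top v) (fun h => by simp [h] at hv)]
  have hq0 : ∀ v : V, 0 ≤ N v → 0 ≤ (N v).toReal := by
    intro v hv
    have := EReal.toReal_le_toReal hv (by simp) (hne_top v)
    simpa using this
  have hFsmul : ∀ (c : ℝ) (v : V), 0 ≤ c → 0 ≤ N v → 0 ≤ N (c • v) := by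
    intro c v hc hv
    rw [hhom c v hc]
    exact mul_nonneg (EReal.coe_nonneg.2 hc) hv
  have hqsmul : ∀ (c : ℝ) (v : V), 0 ≤ c → (N (c • v)).toReal = c * (N v).toReal := by
    intro c v hc
    rw [hhom c v hc, EReal.toReal_mul, EReal.toReal_coe]
  -- superadditivity and cone closure under addition
  have key : ∀ x y : V, 0 ≤ N x → 0 ≤ N y →
      0 ≤ N (x + y) ∧ (N x).toReal + (N y).toReal ≤ (N (x + y)).toReal := by
    intro x y hx hy
    have h := hconc x y (1/2) (by norm_num) (by norm_num)
    have e : (1 - (1/2 : ℝ)) = (1/2 : ℝ) := by norm_num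
    rw [e] at h
    have h2 : (1/2 : ℝ) • x + (1/2 : ℝ) • y = (1/2 : ℝ) • (x + y) := (smul_add _ _ _).symm
    rw [h2, hhom (1/2) (x + y) (by norm_num)] at h
    have hxy : 0 ≤ N (x + y) := by
      rcases hrange (x + y) with hb | hb
      · exfalso
        rw [hb] at h
        have hb2 : ((1/2 : ℝ) : EReal) * (⊥ : EReal) = ⊥ := by
          rw [EReal.coe_mul_bot_of_pos (by norm_num)]
        rw [hb2] at h
        have : (0 : EReal) ≤ ⊥ :=
          le_trans (by { apply add_nonneg <;> exact mul_nonneg (by norm_num) (by assumption) }) h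
        simp at this
      · exact hb
    constructor
    · exact hxy
    · rw [hfin x hx, hfin y hy, hfin _ hxy] at h
      rw [← EReal.coe_mul, ← EReal.coe_mul, ← EReal.coe_mul, ← EReal.coe_add,
        EReal.coe_le_coe_iff] at h
      linarith
  have hFadd : ∀ x y : V, 0 ≤ N x → 0 ≤ N y → 0 ≤ N (x + y) := fun x y hx hy =>
    (key x y hx hy).1
  have hsup : ∀ x y : V, 0 ≤ N x → 0 ≤ N y →
      (N x).toReal + (N y).toReal ≤ (N (x + y)).toReal := fun x y hx hy =>
    (key x y hx hy).2
  -- the main additive identity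
  have hA : ∀ x y z : V, 0 ≤ N x → 0 ≤ N y → 0 ≤ N z →
      (N (x + y + z)).toReal ^ 2 + (N x).toReal ^ 2 + (N y).toReal ^ 2 + (N z).toReal ^ 2
        = (N (x + y)).toReal ^ 2 + (N (x + z)).toReal ^ 2 + (N (y + z)).toReal ^ 2 := by
    intro x y z hx hy hz
    have hyz := hFadd y z hy hz
    have h2y : 0 ≤ N ((2:ℝ) • y) := hFsmul 2 y (by norm_num) hy
    have hx2y : 0 ≤ N (x + (2:ℝ) • y) := hFadd x _ hx h2y
    have hxz := hFadd x z hx hz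
    have E1 := hpar x (y + z) hx hyz
    have E2 := hpar (x + (2:ℝ) • y) z hx2y hz
    have E3 := hpar (x + z) y hxz hy
    have E4 := hpar x y hx hy
    have v1 : x + (2:ℝ) • (y + z) = x + (2:ℝ) • y + (2:ℝ) • z := by module
    have v0 : x + (y + z) = x + y + z := (add_assoc x y z).symm
    have v2 : x + z + (2:ℝ) • y = x + (2:ℝ) • y + z := by module
    have v3 : x + z + y = x + y + z := by module
    rw [v1, v0] at E1
    rw [v2, v3] at E3
    linarith
  -- symmetry part is trivial
  refine ⟨fun x y _ _ => by rw [add_comm x y]; ring, ?_, ?_⟩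
  · intro x y z hx hy hz
    have := hA x y z hx hy hz
    linarith
  -- homogeneity
  · intro c x y hc hx hy
    -- natural number case
    have hD : ∀ (x' : V), 0 ≤ N x' → ∀ n : ℕ,
        (N ((n : ℝ) • x' + y)).toReal ^ 2
          = (n : ℝ) ^ 2 * (N x').toReal ^ 2 + (N y).toReal ^ 2
            + (n : ℝ) * ((N (x' + y)).toReal ^ 2 - (N x').toReal ^ 2 - (N y).toReal ^ 2) := by
      intro x' hx' n
      induction n with
      | zero => simp [h0]
      | succ n ih =>
        have hnx : 0 ≤ N ((n : ℝ) • x') := hFsmul _ _ (by positivity) hx'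
        have hAd := hA ((n : ℝ) • x') x' y hnx hx' hy
        have hv : (n : ℝ) • x' + x' = ((n + 1 : ℕ) : ℝ) • x' := by push_cast; module
        rw [hv] at hAd
        have hq1 : (N (((n + 1 : ℕ) : ℝ) • x')).toReal = ((n + 1 : ℕ) : ℝ) * (N x').toReal :=
          hqsmul _ _ (by positivity)
        have hq2 : (N ((n : ℝ) • x')).toReal = (n : ℝ) * (N x').toReal :=
          hqsmul _ _ (by positivity)
        rw [hq1, hq2] at hAd
        push_cast at hAd ⊢
        nlinarith [hAd, ih]
    -- rational case
    have hQ : ∀ r : ℚ, 0 ≤ r →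
        (N ((r : ℝ) • x + y)).toReal ^ 2
          = (r : ℝ) ^ 2 * (N x).toReal ^ 2 + (N y).toReal ^ 2
            + (r : ℝ) * ((N (x + y)).toReal ^ 2 - (N x).toReal ^ 2 - (N y).toReal ^ 2) := by
      intro r hr
      have hden : (0 : ℝ) < (r.den : ℝ) := by exact_mod_cast r.pos
      set x' : V := ((r.den : ℝ))⁻¹ • x with hx'def
      have hx' : 0 ≤ N x' := hFsmul _ _ (by positivity) hx
      have hdx : ((r.den : ℕ) : ℝ) • x' = x := by
        rw [hx'def, smul_smul, mul_inv_cancel₀ (ne_of_gt hden), one_smul]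
      have hcastnum : ((r.num.toNat : ℕ) : ℝ) = (r.num : ℝ) := by
        exact_mod_cast Int.toNat_of_nonneg (Rat.num_nonneg.2 hr)
      have hrnum : ((r.num.toNat : ℕ) : ℝ) = (r : ℝ) * (r.den : ℝ) := by
        rw [hcastnum, Rat.cast_def]
        field_simp
      have hnum : ((r.num.toNat : ℕ) : ℝ) • x' = (r : ℝ) • x := by
        rw [hx'def, smul_smul, hrnum]
        congr 1
        field_simp
      have h1 := hD x' hx' r.num.toNat
      have h2 := hD x' hx' r.den
      rw [hnum] at h1
      rw [hdx] at h2
      have hqx' : (N x').toReal = ((r.den : ℝ))⁻¹ * (N x).toReal :=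
        hqsmul _ _ (by positivity)
      rw [hqx'] at h1 h2
      rw [hrnum] at h1
      have hden' : ((r.den : ℝ)) ≠ 0 := ne_of_gt hden
      rw [h1, h2]
      field_simp
      ring
    -- real case, by monotone squeeze
    rcases eq_or_lt_of_le hc with hc0 | hcpos
    · rw [← hc0]
      simp [h0]
    · have hmono : ∀ s t : ℝ, 0 ≤ s → s ≤ t →
          (N (s • x + y)).toReal ≤ (N (t • x + y)).toReal := by
        intro s t hs hst
        have hsxy : 0 ≤ N (s • x + y) := hFadd _ _ (hFsmul _ _ hs hx) hy
        have hts : 0 ≤ N ((t - s) • x) := hFsmul _ _ (by linarith) hx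
        have h := hsup _ _ hts hsxy
        have hv : (t - s) • x + (s • x + y) = t • x + y := by module
        rw [hv] at h
        have := hq0 _ hts
        linarith
      have hnn : ∀ t : ℝ, 0 ≤ t → 0 ≤ (N (t • x + y)).toReal := by
        intro t ht
        exact hq0 _ (hFadd _ _ (hFsmul _ _ ht hx) hy)
      have hgoal := hyperbolic_squeeze_aux (fun t => (N (t • x + y)).toReal)
        ((N x).toReal ^ 2) ((N y).toReal ^ 2)
        ((N (x + y)).toReal ^ 2 - (N x).toReal ^ 2 - (N y).toReal ^ 2) c hcpos
        hmono hnn hQ (by positivity)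
      rw [hgoal, hqsmul c x hc]
      ring
end
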